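/- arXiv:1912.03101 — 2 statements merged into one kernel-verified Lean document; each statement's English description precedes it below -/
import Mathlib

section
/- Let n and i be natural numbers with 2i ≤ n. For each j with 0 ≤ j ≤ i, let σ_j be the permutation of {0,1,…,n−1} that is the product of the j disjoint transpositions (2t, 2t+1) for t = 0,…,j−1. Then for every (not necessarily irreducible) finite-dimensional complex representation of the symmetric group S_n with character χ, there exists a natural number m such that Σ_{j=0}^{i} C(i,j) · χ(σ_j) = 2^i · m. (This extends the Chan–Lam lemma from irreducible characters to arbitrary characters, and is what the paper uses to conclude that α_i(γ) ≥ 0 for every Schur-positive symmetric function γ, in particular for the homogeneous symmetric functions h_λ and the elementary symmetric functions e_λ.) -/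
open CategoryTheory

/-- The transposition `(2t, 2t+1)` of `{0, 1, …, n−1}` (the identity if `2t+1 ≥ n`). -/
def tau (n t : ℕ) : Equiv.Perm (Fin n) :=
  if h : 2 * t + 1 < n then Equiv.swap ⟨2 * t, by omega⟩ ⟨2 * t + 1, h⟩ else 1

/-- The permutation `σ_j = (0 1)(2 3)⋯(2j−2 2j−1)` of `{0, 1, …, n−1}`,
a product of `j` disjoint transpositions. -/
def sigma (n j : ℕ) : Equiv.Perm (Fin n) :=
  ((List.range j).map (tau n)).prod

/-
Put `P = ∏_{t<i} (1 + ρ(τ_t))`. The `τ_t` are commuting involutions, so `P² = 2^i P`: thus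
`P / 2^i` is idempotent and `tr P = 2^i · rank P`. Expanding the product, `tr P` is the sum of
`χ(∏_{t∈S} τ_t)` over `S ⊆ {0, …, i-1}`, and `∏_{t∈S} τ_t` is conjugate to `σ_{|S|}`. Peeling off
one factor at a time, the conjugation is done by a permutation swapping the blocks `{2a, 2a+1}` and
`{2b, 2b+1}`, which commutes with the factors still to be expanded; this gives the binomial
recursion `tr P = ∑_j C(i,j) χ(σ_j)`.
-/

open Equiv Finset

theorem List.prod_map_one_add_mul_self {ι R : Type*} [Semiring R] (f : ι → R) (l : List ι)
    (hf : ∀ i ∈ l, f i * f i = 1) (hl : l.Pairwise fun i j => Commute (f i) (f j)) :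
    (l.map (1 + f ·)).prod * (l.map (1 + f ·)).prod = 2 ^ l.length * (l.map (1 + f ·)).prod := by
  induction l with
  | nil => simp
  | cons i l ih =>
    rw [List.pairwise_cons] at hl
    have hcomm : Commute (1 + f i) (l.map (1 + f ·)).prod :=
      Commute.list_prod_right _ _ fun y hy => by
        obtain ⟨j, hj, rfl⟩ := List.mem_map.mp hy
        exact (Commute.one_left _).add_left ((Commute.one_right _).add_right (hl.1 j hj))
    have hsq : (1 + f i) * (1 + f i) = 2 * (1 + f i) := by
      rw [two_mul]
      simp only [add_mul, mul_add, one_mul, mul_one, hf i List.mem_cons_self]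
      abel
    simp only [List.map_cons, List.prod_cons, List.length_cons]
    have hpow : Commute (1 + f i) (2 ^ l.length) := (Commute.ofNat_right _ 2).pow_right _
    rw [hcomm.symm.mul_mul_mul_comm, hsq, ih (fun j hj => hf j (List.mem_cons_of_mem _ hj)) hl.2,
      mul_assoc, ← mul_assoc (1 + f i), hpow.eq, pow_succ']
    simp only [mul_assoc]

theorem sum_range_succ_choose_mul {R : Type*} [Semiring R] (f : ℕ → R) (i : ℕ) :
    ∑ j ∈ range (i + 2), ((i + 1).choose j : R) * f j =
      ∑ j ∈ range (i + 1), (i.choose j : R) * (f j + f (j + 1)) := by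
  have hlow : ∑ j ∈ range (i + 1), (i.choose (j + 1) : R) * f (j + 1) + f 0 =
      ∑ j ∈ range (i + 1), (i.choose j : R) * f j := by
    rw [sum_range_succ, Nat.choose_succ_self, sum_range_succ' _ i]
    simp
  rw [sum_range_succ']
  simp only [Nat.choose_succ_succ, Nat.cast_add, add_mul, mul_add, sum_add_distrib,
    Nat.choose_zero_right, Nat.cast_one, one_mul]
  rw [add_assoc, hlow, add_comm]

theorem LinearMap.trace_eq_mul_finrank_range_of_mul_self_eq_smul {k V : Type*} [Field k]
    [AddCommGroup V] [Module k V] [FiniteDimensional k V] {f : Module.End k V} {c : k}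
    (hc : c ≠ 0) (hf : f * f = c • f) :
    LinearMap.trace k V f = c * Module.finrank k (LinearMap.range f) := by
  have he : IsIdempotentElem (c⁻¹ • f) := by
    rw [IsIdempotentElem, smul_mul_smul_comm, hf, smul_smul, mul_assoc, inv_mul_cancel₀ hc,
      mul_one]
  rw [← LinearMap.range_smul f c⁻¹ (inv_ne_zero hc),
    ← (LinearMap.IsIdempotentElem.isProj_range _ he).trace, map_smul, smul_eq_mul,
    mul_inv_cancel_left₀ hc]

theorem tau_mul_self (n t : ℕ) : tau n t * tau n t = 1 := by
  unfold tau
  split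
  · exact swap_mul_self _ _
  · exact one_mul 1

theorem tau_commute (n : ℕ) {s t : ℕ} (hst : s ≠ t) : Commute (tau n s) (tau n t) := by
  unfold tau
  split_ifs
  · refine (Perm.disjoint_swap_swap ?_).commute
    simp only [List.nodup_cons, List.mem_cons, List.not_mem_nil, List.nodup_nil, Fin.ext_iff,
      or_false, not_false_eq_true, and_true]
    omega
  all_goals simp

theorem sigma_zero (n : ℕ) : sigma n 0 = 1 := rfl

theorem sigma_succ (n j : ℕ) : sigma n (j + 1) = sigma n j * tau n j := by
  simp [sigma, List.range_succ]

theorem sigma_commute_tau (n : ℕ) {a b : ℕ} (hba : b ≤ a) : Commute (sigma n b) (tau n a) :=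
  Commute.list_prod_left _ _ fun x hx => by
    obtain ⟨t, ht, rfl⟩ := List.mem_map.mp hx
    exact tau_commute n (by have := List.mem_range.mp ht; omega)

section blockSwap

variable {n a b : ℕ} (ha : 2 * a + 1 < n) (hb : 2 * b + 1 < n)

def blockSwap : Perm (Fin n) :=
  swap ⟨2 * b, by omega⟩ ⟨2 * a, by omega⟩ * swap ⟨2 * b + 1, hb⟩ ⟨2 * a + 1, ha⟩

theorem val_blockSwap_apply (x : Fin n) :
    (blockSwap ha hb x : ℕ) =
      if (x : ℕ) / 2 = a then 2 * b + x % 2 else if (x : ℕ) / 2 = b then 2 * a + x % 2 else x := by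
  simp only [blockSwap, Perm.mul_apply, swap_apply_def, Fin.ext_iff, apply_ite Fin.val]
  split_ifs <;> omega

theorem blockSwap_conj_tau_self : MulAut.conj (blockSwap ha hb) (tau n a) = tau n b := by
  rw [tau, dif_pos ha, tau, dif_pos hb, MulAut.conj_apply, ← swap_apply_apply]
  congr 1 <;> ext <;> simp only [val_blockSwap_apply] <;> split_ifs <;> omega

theorem blockSwap_conj_tau_of_ne {t : ℕ} (hta : t ≠ a) (htb : t ≠ b) :
    MulAut.conj (blockSwap ha hb) (tau n t) = tau n t := by
  by_cases ht : 2 * t + 1 < n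
  · rw [tau, dif_pos ht, MulAut.conj_apply, ← swap_apply_apply]
    congr 1 <;> ext <;> simp only [val_blockSwap_apply] <;> split_ifs <;> omega
  · rw [tau, dif_neg ht, map_one]

theorem blockSwap_conj_sigma_mul_tau (hba : b ≤ a) :
    MulAut.conj (blockSwap ha hb) (sigma n b * tau n a) = sigma n (b + 1) := by
  have hsigma : MulAut.conj (blockSwap ha hb) (sigma n b) = sigma n b := by
    rw [sigma, map_list_prod, List.map_map]
    refine congrArg List.prod (List.map_congr_left fun t ht => ?_)
    have := List.mem_range.mp ht
    exact blockSwap_conj_tau_of_ne ha hb (by omega) (by omega)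
  rw [map_mul, hsigma, blockSwap_conj_tau_self, sigma_succ]

end blockSwap

section segProd

variable {k V : Type*} [Field k] [AddCommGroup V] [Module k V] {n : ℕ}
  (ρ : Representation k (Perm (Fin n)) V)

def segProd (a i : ℕ) : Module.End k V :=
  ((List.range' a i).map fun t => 1 + ρ (tau n t)).prod

theorem segProd_succ (a i : ℕ) :
    segProd ρ a (i + 1) = (1 + ρ (tau n a)) * segProd ρ (a + 1) i := by
  rw [segProd, List.range'_succ, List.map_cons, List.prod_cons, segProd]

theorem commute_segProd {a : ℕ} (i : ℕ) {g : Perm (Fin n)}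
    (hg : ∀ t, a ≤ t → Commute g (tau n t)) : Commute (ρ g) (segProd ρ a i) :=
  Commute.list_prod_right _ _ fun x hx => by
    obtain ⟨t, ht, rfl⟩ := List.mem_map.mp hx
    exact (Commute.one_right _).add_right ((hg t (List.mem_range'_1.mp ht).1).map ρ)

theorem segProd_mul_self (a i : ℕ) :
    segProd ρ a i * segProd ρ a i = (2 : k) ^ i • segProd ρ a i := by
  have h := List.prod_map_one_add_mul_self (fun t => ρ (tau n t)) (List.range' a i)
    (fun t _ => by rw [← map_mul, tau_mul_self, map_one])
    ((List.nodup_range' ..).imp fun hst => (tau_commute n hst).map ρ)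
  rw [List.length_range'] at h
  rw [segProd, h, Algebra.smul_def, map_pow, map_ofNat]

theorem trace_segProd_mul_conj {a i : ℕ} {g : Perm (Fin n)}
    (hg : ∀ t, a ≤ t → Commute g (tau n t)) (y : Perm (Fin n)) :
    LinearMap.trace k V (segProd ρ a i * ρ (MulAut.conj g y)) =
      LinearMap.trace k V (segProd ρ a i * ρ y) := by
  rw [MulAut.conj_apply, map_mul ρ, map_mul ρ, ← mul_assoc, ← mul_assoc,
    ← (commute_segProd ρ i hg).eq, LinearMap.trace_mul_comm, ← mul_assoc, ← mul_assoc,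
    ← map_mul ρ, inv_mul_cancel, map_one, one_mul]

theorem trace_segProd_mul_sigma {a b : ℕ} (i : ℕ) (hba : b ≤ a) (hn : 2 * (a + i) ≤ n) :
    LinearMap.trace k V (segProd ρ a i * ρ (sigma n b)) =
      ∑ j ∈ range (i + 1), (i.choose j : k) * ρ.character (sigma n (b + j)) := by
  induction i generalizing a b with
  | zero => simp [segProd, Representation.character]
  | succ i ih =>
    have ha : 2 * a + 1 < n := by omega
    have hb : 2 * b + 1 < n := by omega
    have hshift : LinearMap.trace k V (ρ (tau n a) * segProd ρ (a + 1) i * ρ (sigma n b)) =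
        LinearMap.trace k V (segProd ρ (a + 1) i * ρ (sigma n (b + 1))) := by
      have hg : ∀ t, a + 1 ≤ t → Commute (blockSwap ha hb) (tau n t) := fun t ht =>
        mul_inv_eq_iff_eq_mul.mp (blockSwap_conj_tau_of_ne ha hb (by omega) (by omega))
      rw [← blockSwap_conj_sigma_mul_tau ha hb hba, trace_segProd_mul_conj ρ hg,
        (commute_segProd ρ i fun t ht => tau_commute n (by omega)).eq, mul_assoc, ← map_mul ρ,
        (sigma_commute_tau n hba).eq]
    rw [segProd_succ, add_mul, one_mul, add_mul, map_add, hshift, ih (by omega) (by omega),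
      ih (by omega) (by omega), sum_range_succ_choose_mul, ← sum_add_distrib]
    refine sum_congr rfl fun j _ => ?_
    rw [mul_add, add_right_comm b 1 j, ← add_assoc]

end segProd

theorem sum_choose_mul_character_sigma {k V : Type*} [Field k] [AddCommGroup V] [Module k V]
    [FiniteDimensional k V] {n i : ℕ} (ρ : Representation k (Perm (Fin n)) V) (h2 : (2 : k) ≠ 0)
    (hi : 2 * i ≤ n) :
    ∑ j ∈ range (i + 1), (i.choose j : k) * ρ.character (sigma n j) =
      2 ^ i * Module.finrank k (LinearMap.range (segProd ρ 0 i)) := by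
  have htrace := trace_segProd_mul_sigma ρ (a := 0) (b := 0) i le_rfl (by omega)
  simp only [sigma_zero, map_one, mul_one, zero_add] at htrace
  rw [← htrace, LinearMap.trace_eq_mul_finrank_range_of_mul_self_eq_smul (pow_ne_zero i h2)
    (segProd_mul_self ρ 0 i)]

/-- (Chan–Lam) For `2i ≤ n` and any (not necessarily irreducible) finite-dimensional complex representation of
`S_n` with character `χ`, the quantity `∑_{j=0}^{i} C(i,j) · χ(σ_j)` is `2^i` times a
non-negative integer. -/
theorem chan_lam_general (n i : ℕ) (hi : 2 * i ≤ n)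
    (V : FDRep ℂ (Equiv.Perm (Fin n))) :
    ∃ m : ℕ, ∑ j ∈ Finset.range (i + 1),
        (i.choose j : ℂ) * V.character (sigma n j) = 2 ^ i * (m : ℂ) :=
  ⟨_, sum_choose_mul_character_sigma V.ρ two_ne_zero hi⟩
end

section
/- Let G be a simple graph on a finite vertex set V that is acyclic (a forest), let q be a real number, and let 𝓛^q = I + q²(D − I) − qA be its q-Laplacian. Let f be a function from the permutations of V to the complex numbers that vanishes on every involution (i.e., f(ψ) = 0 whenever ψ ∘ ψ = id). Form the matrix x·I − 𝓛^q with entries in the polynomial ring ℂ[x]. Then the generalized matrix polynomial Σ_{ψ ∈ Sym(V)} f(ψ) · ∏_{v ∈ V} (x·I − 𝓛^q)_{v, ψ(v)} is the zero polynomial. (This is the mechanism behind the paper's Theorem 1: since the inverse Frobenius image of the monomial symmetric function m_λ vanishes on all involutions when λ is not of the form 2^k 1^{n−2k}, the corresponding generalized matrix polynomial of the q-Laplacian of a tree is identically zero for such λ.) -/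
/-! Off the diagonal, `x·I − 𝓛^q` is supported on the edges of `G`, so a permutation `ψ`
contributes to the sum only if it moves every vertex it does not fix to a neighbour. In a
forest such a permutation has no orbit of length `≥ 3`, which would trace a cycle; hence `ψ`
is an involution and its weight `f ψ` vanishes. -/

open Polynomial

/-- The `q`-Laplacian `𝓛^q = I + q²(D − I) − qA` of a simple graph `G`. -/
def qLap {V : Type} [Fintype V] [DecidableEq V] (G : SimpleGraph V) [DecidableRel G.Adj]
    (q : ℝ) : Matrix V V ℝ :=
  1 + q ^ 2 • (G.degMatrix ℝ - 1) - q • G.adjMatrix ℝ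

namespace SimpleGraph

variable {V : Type*} {G : SimpleGraph V}

/-- The vertices reachable from `ψ v` without the edge `v ψ(v)` form a finite set that `ψ`
maps into itself, hence onto itself; so they contain `ψ⁻¹ (ψ v) = v`, which contradicts
that the edge is a bridge. -/
theorem IsAcyclic.perm_mul_self_eq_one [Finite V] (hG : G.IsAcyclic) (ψ : Equiv.Perm V)
    (hψ : ∀ w, ψ w ≠ w → G.Adj w (ψ w)) : ψ * ψ = 1 := by
  refine Equiv.ext fun v => by_contra fun hv => ?_
  have hv : ψ (ψ v) ≠ v := hv
  have hmoved : ψ v ≠ v := fun h => hv (by rw [h, h])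
  set H := G.deleteEdges {s(v, ψ v)}
  have hbridge : ¬ H.Reachable v (ψ v) :=
    isBridge_iff.mp (isAcyclic_iff_forall_adj_isBridge.mp hG (hψ v hmoved))
  set S := {x | H.Reachable (ψ v) x}
  have hmaps : Set.MapsTo ψ S S := by
    intro x (hx : H.Reachable (ψ v) x)
    have hxv : x ≠ v := fun h => hbridge (h ▸ hx).symm
    show H.Reachable (ψ v) (ψ x)
    by_cases hfix : ψ x = x
    · rwa [hfix]
    refine hx.trans (Adj.reachable ?_)
    rw [deleteEdges_adj, Set.mem_singleton_iff, Sym2.eq_iff]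
    refine ⟨hψ x hfix, ?_⟩
    rintro (⟨h, -⟩ | ⟨rfl, h⟩)
    exacts [hxv h, hv h]
  obtain ⟨y, hy, hyv⟩ := ((Set.toFinite S).injOn_iff_bijOn_of_mapsTo hmaps).mp
    ψ.injective.injOn |>.surjOn (Reachable.refl (ψ v))
  exact hbridge (ψ.injective hyv ▸ hy).symm

theorem IsAcyclic.sum_perm_mul_prod_eq_zero [Fintype V] [DecidableEq V] {R : Type*}
    [CommSemiring R] (hG : G.IsAcyclic) (M : Matrix V V R)
    (hM : ∀ w u, w ≠ u → ¬ G.Adj w u → M w u = 0) (f : Equiv.Perm V → R)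
    (hf : ∀ ψ : Equiv.Perm V, ψ * ψ = 1 → f ψ = 0) :
    ∑ ψ : Equiv.Perm V, f ψ * ∏ v, M v (ψ v) = 0 := by
  refine Finset.sum_eq_zero fun ψ _ => ?_
  by_cases hψ : ∀ w, ψ w ≠ w → G.Adj w (ψ w)
  · rw [hf ψ (hG.perm_mul_self_eq_one ψ hψ), zero_mul]
  · push Not at hψ
    obtain ⟨w, hmoved, hnadj⟩ := hψ
    rw [Finset.prod_eq_zero (Finset.mem_univ w) (hM w (ψ w) hmoved.symm hnadj), mul_zero]

end SimpleGraph

theorem qLap_apply_of_ne_of_not_adj {V : Type} [Fintype V] [DecidableEq V]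
    (G : SimpleGraph V) [DecidableRel G.Adj] (q : ℝ) {w u : V} (hwu : w ≠ u)
    (hadj : ¬ G.Adj w u) : qLap G q w u = 0 := by
  simp [qLap, Matrix.one_apply_ne hwu, SimpleGraph.degMatrix, hadj, hwu]

/-- For a forest `G` and a weight function `f` on permutations that vanishes on every
involution, the generalized matrix polynomial
`∑_ψ f(ψ) ∏_v (x·I − 𝓛^q)_{v, ψ(v)}` is the zero polynomial. -/
theorem gmf_poly_qLap_forest_eq_zero {V : Type} [Fintype V] [DecidableEq V]
    (G : SimpleGraph V) [DecidableRel G.Adj] (hG : G.IsAcyclic) (q : ℝ)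
    (f : Equiv.Perm V → ℂ) (hf : ∀ ψ : Equiv.Perm V, ψ * ψ = 1 → f ψ = 0) :
    ∑ ψ : Equiv.Perm V,
        Polynomial.C (f ψ) *
          ∏ v, ((X : ℂ[X]) • (1 : Matrix V V ℂ[X]) -
              (qLap G q).map (fun a => Polynomial.C ((a : ℝ) : ℂ))) v (ψ v) = 0 :=
  hG.sum_perm_mul_prod_eq_zero _
    (fun w u hwu hadj => by
      simp [Matrix.one_apply_ne hwu, qLap_apply_of_ne_of_not_adj G q hwu hadj])
    _ (fun ψ hψ => by rw [hf ψ hψ, map_zero])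
end
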